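/- arXiv:1703.03280 — 2 statements merged into one kernel-verified Lean document; each statement's English description precedes it below -/
import Mathlib

section
/- Let (Ω, 𝒜, P) be a probability space and (λ_k)_{k≥0} a sequence of pairwise independent positive real-valued random variables, and let (f_k)_{k≥0} be nonzero complex numbers with (log k)/(log|f_k|) → 0 as k → ∞. Let ρ ∈ (−∞, 0], and assume that for almost every ω: for every real x < ρ the series ∑_{k=0}^∞ |f_k| e^{xλ_k(ω)} converges, and for every real x > 0 the series ∑_{k=0}^∞ |f_k| e^{xλ_k(ω)} diverges (i.e. ρ ≤ σ(f,ω) ≤ 0 a.s., where σ is the abscissa of absolute convergence). Then for every ε > 0: ∑_{k=0}^∞ P{ω : λ_k(ω) < (log|f_k|)/(ε − ρ)} < +∞. -/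
/-!
If `∑ P(A_k) = ∞` for the events `A_k = {λ_k < log|f_k| / (ε - ρ)}`, then, since the `A_k` are
pairwise independent, the variance of `N = ∑_{k ∈ s} 1_{A_k}` is at most its mean
`∑_{k ∈ s} P(A_k)`, and Chebyshev's inequality at `N = 0` shows that almost surely infinitely many
`A_k` occur. On `A_k` the term `|f_k| e^{(ρ - ε/2) λ_k}` exceeds `1`, which contradicts the
almost sure convergence of `∑ |f_k| e^{x λ_k}` at `x = ρ - ε/2 < ρ`.
-/

open MeasureTheory ProbabilityTheory Filter Topology
open scoped ENNReal

namespace ProbabilityTheory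

variable {Ω ι : Type*} [MeasurableSpace Ω] {P : Measure Ω} [IsProbabilityMeasure P]
  {A : ι → Set Ω}

lemma variance_indicator_one_le {s : Set Ω} (hs : MeasurableSet s) :
    variance (s.indicator 1) P ≤ P.real s := by
  calc variance (s.indicator 1) P ≤ ∫ ω, (s.indicator 1 ^ 2) ω ∂P :=
        variance_le_expectation_sq (measurable_one.indicator hs).aestronglyMeasurable
    _ = P.real s := by
        rw [← integral_indicator_one hs]
        congr 1 with ω
        by_cases h : ω ∈ s <;> simp [h]

lemma memLp_indicator_one (p : ℝ≥0∞) {s : Set Ω} (hs : MeasurableSet s) :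
    MemLp (s.indicator (1 : Ω → ℝ)) p P :=
  memLp_indicator_const p hs 1 (Or.inr (measure_ne_top P s))

lemma variance_sum_indicator_le (hA : ∀ i, MeasurableSet (A i))
    (hindep : Pairwise fun i j =>
      IndepFun ((A i).indicator (1 : Ω → ℝ)) ((A j).indicator (1 : Ω → ℝ)) P)
    (s : Finset ι) :
    variance (∑ i ∈ s, (A i).indicator (1 : Ω → ℝ)) P ≤ ∑ i ∈ s, P.real (A i) := by
  rw [IndepFun.variance_sum (X := fun i => (A i).indicator 1)
    (fun i _ => memLp_indicator_one 2 (hA i)) (fun i _ j _ hij => hindep hij)]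
  exact Finset.sum_le_sum fun i _ => variance_indicator_one_le (hA i)

lemma measure_iInter_compl_le_inv_sum (hA : ∀ i, MeasurableSet (A i))
    (hindep : Pairwise fun i j =>
      IndepFun ((A i).indicator (1 : Ω → ℝ)) ((A j).indicator (1 : Ω → ℝ)) P)
    (s : Finset ι) :
    P (⋂ i ∈ s, (A i)ᶜ) ≤ (∑ i ∈ s, P (A i))⁻¹ := by
  set S := ∑ i ∈ s, P.real (A i)
  have hS : ∑ i ∈ s, P (A i) = ENNReal.ofReal S := by
    rw [ENNReal.ofReal_sum_of_nonneg fun _ _ => measureReal_nonneg]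
    exact Finset.sum_congr rfl fun i _ => (ofReal_measureReal (measure_ne_top P _)).symm
  have hS_nonneg : 0 ≤ S := Finset.sum_nonneg fun i _ => measureReal_nonneg
  rcases hS_nonneg.eq_or_lt with hS0 | hSpos
  · rw [hS, ← hS0, ENNReal.ofReal_zero, ENNReal.inv_zero]
    exact le_top
  set N := ∑ i ∈ s, (A i).indicator (1 : Ω → ℝ)
  have hN_mean : P[N] = S := by
    simp only [N, Finset.sum_apply]
    rw [integral_finsetSum _ fun i _ => (memLp_indicator_one 1 (hA i)).integrable le_rfl]
    exact Finset.sum_congr rfl fun i _ => integral_indicator_one (hA i)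
  have hN_memLp : MemLp N 2 P :=
    memLp_finsetSum' s fun i _ => memLp_indicator_one 2 (hA i)
  have hsub : ⋂ i ∈ s, (A i)ᶜ ⊆ {ω | S ≤ |N ω - P[N]|} := by
    intro ω hω
    simp only [Set.mem_iInter, Set.mem_compl_iff] at hω
    have hN0 : N ω = 0 := by
      simp only [N, Finset.sum_apply]
      exact Finset.sum_eq_zero fun i hi => Set.indicator_of_notMem (hω i hi) _
    simp only [Set.mem_ofPred_eq, hN0, hN_mean, zero_sub, abs_neg]
    exact le_abs_self S
  calc P (⋂ i ∈ s, (A i)ᶜ) ≤ P {ω | S ≤ |N ω - P[N]|} := measure_mono hsub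
    _ ≤ ENNReal.ofReal (variance N P / S ^ 2) := meas_ge_le_variance_div_sq hN_memLp hSpos
    _ ≤ ENNReal.ofReal S⁻¹ := by
        refine ENNReal.ofReal_le_ofReal ?_
        calc variance N P / S ^ 2 ≤ S / S ^ 2 := by
              gcongr
              exact variance_sum_indicator_le hA hindep s
          _ = S⁻¹ := by field_simp
    _ = (∑ i ∈ s, P (A i))⁻¹ := by rw [ENNReal.ofReal_inv_of_pos hSpos, hS]

theorem ae_frequently_mem_of_pairwise_indepFun_indicator {A : ℕ → Set Ω}
    (hA : ∀ n, MeasurableSet (A n))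
    (hindep : Pairwise fun i j =>
      IndepFun ((A i).indicator (1 : Ω → ℝ)) ((A j).indicator (1 : Ω → ℝ)) P)
    (hsum : ∑' n, P (A n) = ∞) :
    ∀ᵐ ω ∂P, ∃ᶠ n in atTop, ω ∈ A n := by
  simp only [frequently_atTop]
  refine ae_all_iff.2 fun m => ae_iff.2 ?_
  have htail_sum : ∑' k, P (A (k + m)) = ∞ := by
    rw [← ENNReal.summable.sum_add_tsum_nat_add', ENNReal.add_eq_top] at hsum
    exact hsum.resolve_left (ENNReal.sum_ne_top.2 fun k _ => measure_ne_top P _)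
  have htail : Tendsto (fun n => ∑ k ∈ Finset.Ico m (m + n), P (A k)) atTop (𝓝 ∞) := by
    have h := ENNReal.tendsto_nat_tsum fun k => P (A (k + m))
    rw [htail_sum] at h
    simpa [Finset.sum_Ico_eq_sum_range, add_comm] using h
  have hinv : Tendsto (fun n => (∑ k ∈ Finset.Ico m (m + n), P (A k))⁻¹) atTop (𝓝 0) := by
    simpa using tendsto_inv_iff.2 htail
  refine le_antisymm (ge_of_tendsto' hinv fun n => ?_) bot_le
  calc P {ω | ¬∃ k ≥ m, ω ∈ A k} ≤ P (⋂ k ∈ Finset.Ico m (m + n), (A k)ᶜ) := by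
        refine measure_mono fun ω hω => ?_
        simp only [Set.mem_ofPred_eq, not_exists, not_and] at hω
        simp only [Set.mem_iInter, Set.mem_compl_iff, Finset.mem_Ico]
        exact fun k hk => hω k hk.1
    _ ≤ _ := measure_iInter_compl_le_inv_sum hA hindep _

theorem ae_frequently_mem_preimage_of_pairwise_indepFun {α : Type*} [MeasurableSpace α]
    {X : ℕ → Ω → α} (hX : ∀ n, Measurable (X n))
    (hindep : Pairwise fun i j => IndepFun (X i) (X j) P)
    {B : ℕ → Set α} (hB : ∀ n, MeasurableSet (B n)) (hsum : ∑' n, P (X n ⁻¹' B n) = ∞) :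
    ∀ᵐ ω ∂P, ∃ᶠ n in atTop, X n ω ∈ B n :=
  ae_frequently_mem_of_pairwise_indepFun_indicator (fun n => hX n (hB n))
    (fun i j hij => (hindep hij).comp (measurable_one.indicator (hB i))
      (measurable_one.indicator (hB j))) hsum

end ProbabilityTheory

lemma one_lt_mul_exp_mul_of_lt_log_div {a t d x : ℝ} (ha : 0 ≤ a) (ht : 0 < t) (hd : 0 < d)
    (hx : -d ≤ x) (h : t < Real.log a / d) : 1 < a * Real.exp (x * t) := by
  have hlog : t * d < Real.log a := (lt_div_iff₀ hd).1 h
  have ha_pos : 0 < a := by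
    refine ha.lt_of_ne fun h0 => ?_
    rw [← h0, Real.log_zero] at hlog
    nlinarith
  rw [← Real.exp_log ha_pos, ← Real.exp_add]
  exact Real.one_lt_exp_iff.2 (by nlinarith)

theorem stmt_9_general {Ω : Type*} [MeasurableSpace Ω] (P : MeasureTheory.Measure Ω)
    [MeasureTheory.IsProbabilityMeasure P]
    (l : ℕ → Ω → ℝ) (hlm : ∀ k, Measurable (l k)) (hlpos : ∀ k ω, 0 < l k ω)
    (hindep : Pairwise (fun i j => ProbabilityTheory.IndepFun (l i) (l j) P))
    (f : ℕ → ℂ)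
    (ρ : ℝ) (hρ : ρ ≤ 0)
    (habs : ∀ᵐ ω ∂P,
      (∀ x : ℝ, x < ρ → Summable (fun k => ‖f k‖ * Real.exp (x * l k ω))) ∧
      (∀ x : ℝ, 0 < x → ¬ Summable (fun k => ‖f k‖ * Real.exp (x * l k ω)))) :
    ∀ ε : ℝ, 0 < ε →
      (∑' k : ℕ, P {ω | l k ω < Real.log (‖f k‖) / (ε - ρ)}) < ⊤ := by
  intro ε hε
  refine lt_top_iff_ne_top.2 fun hsum => ?_
  have hfreq := ae_frequently_mem_preimage_of_pairwise_indepFun hlm hindep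
    (B := fun k => Set.Iio (Real.log ‖f k‖ / (ε - ρ))) (fun k => measurableSet_Iio) hsum
  obtain ⟨ω, ⟨hconv, -⟩, hω⟩ := (habs.and hfreq).exists
  have hsmall := (hconv (ρ - ε / 2) (by linarith)).tendsto_atTop_zero.eventually
    (gt_mem_nhds one_pos)
  obtain ⟨k, hk_small, hk_mem⟩ := (hsmall.and_frequently hω).exists
  exact hk_small.not_gt (one_lt_mul_exp_mul_of_lt_log_div (norm_nonneg _) (hlpos k ω)
    (by linarith) (by linarith) hk_mem)

/-- Dirichlet series with pairwise independent random exponents: if the abscissa of absolute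
convergence satisfies `ρ ≤ σ(f,ω) ≤ 0` almost surely (with `ρ ≤ 0`), then for every `ε > 0`
the series `∑_k P{ω : λ_k(ω) < (log|f_k|)/(ε − ρ)}` converges. -/
theorem stmt_9 {Ω : Type*} [MeasurableSpace Ω] (P : MeasureTheory.Measure Ω)
    [MeasureTheory.IsProbabilityMeasure P]
    (l : ℕ → Ω → ℝ) (hlm : ∀ k, Measurable (l k)) (hlpos : ∀ k ω, 0 < l k ω)
    (hindep : Pairwise (fun i j => ProbabilityTheory.IndepFun (l i) (l j) P))
    (f : ℕ → ℂ) (hf : ∀ k, f k ≠ 0)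
    (hcoef : Filter.Tendsto
      (fun k : ℕ => Real.log k / Real.log (‖f k‖)) Filter.atTop (nhds 0))
    (ρ : ℝ) (hρ : ρ ≤ 0)
    (habs : ∀ᵐ ω ∂P,
      (∀ x : ℝ, x < ρ → Summable (fun k => ‖f k‖ * Real.exp (x * l k ω))) ∧
      (∀ x : ℝ, 0 < x → ¬ Summable (fun k => ‖f k‖ * Real.exp (x * l k ω)))) :
    ∀ ε : ℝ, 0 < ε →
      (∑' k : ℕ, P {ω | l k ω < Real.log (‖f k‖) / (ε - ρ)}) < ⊤ :=
  stmt_9_general P l hlm hlpos hindep f ρ hρ habs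
end

section
/- Let (Ω, 𝒜, P) be a probability space and (λ_k)_{k≥0} a sequence of pairwise independent positive real-valued random variables, and let (f_k)_{k≥0} be nonzero complex numbers with (log k)/(log|f_k|) → 0 as k → ∞. Let ρ > 0 and assume that for almost every ω there exists a real x > ρ such that ∑_{k=0}^∞ |f_k| e^{xλ_k(ω)} converges (i.e. the abscissa of absolute convergence σ(f,ω) > ρ a.s.). Then ∑_{k=0}^∞ P{ω : λ_k(ω) ≥ (−log|f_k|)/ρ} < +∞. -/
/-!
On the event `A k = {λ_k ≥ -log|f_k| / ρ}` the `k`-th term `|f_k| e^{x λ_k}` is at least `1` for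
every `x > ρ`, so almost surely only finitely many of the events `A k` occur. The events are pairwise
independent, and for pairwise independent events with divergent probability sum the second
Borel–Cantelli lemma still holds (Erdős–Rényi): the number `N_n` of occurrences among the first `n`
has mean `S_n = ∑_{k<n} P(A k) → ∞` and variance at most `S_n`, so Chebyshev's inequality gives
`P(N_n ≤ S_n / 2) ≤ 4 / S_n → 0`.
-/

open MeasureTheory ProbabilityTheory Filter Finset
open scoped ENNReal Topology

theorem Finset.sum_range_indicator_le_of_forall_notMem {α : Type*} {s : ℕ → Set α} {a : α}
    {K : ℕ} (hK : ∀ k ≥ K, a ∉ s k) (n : ℕ) :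
    ∑ k ∈ range n, (s k).indicator (1 : α → ℝ) a ≤ K := by
  calc ∑ k ∈ range n, (s k).indicator (1 : α → ℝ) a
      = ∑ k ∈ range (min n K), (s k).indicator (1 : α → ℝ) a := by
        refine (sum_subset (range_subset_range.2 (min_le_left n K)) fun k hkn hkK => ?_).symm
        simp only [mem_range, lt_min_iff, not_and_or, not_lt] at hkn hkK
        exact Set.indicator_of_notMem (hK k (hkK.resolve_left hkn.not_ge)) _
    _ ≤ ∑ _k ∈ range (min n K), (1 : ℝ) :=
        sum_le_sum fun k _ => Set.indicator_le_self' (fun _ _ => zero_le_one) a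
    _ ≤ K := by simp

namespace ProbabilityTheory

variable {Ω : Type*} {mΩ : MeasurableSpace Ω} {μ : Measure Ω}

theorem IndepSet.indepFun_indicator_one {s t : Set Ω} (h : IndepSet s t μ) :
    s.indicator (1 : Ω → ℝ) ⟂ᵢ[μ] t.indicator (1 : Ω → ℝ) :=
  Indep.indicator_indepFun 1 (MeasurableSpace.measurableSet_generateFrom (Set.mem_singleton s))
    (indep_of_indep_of_le_right h (measurable_const.indicator
      (MeasurableSpace.measurableSet_generateFrom (Set.mem_singleton t))).comap_le)

theorem memLp_indicator_one_s10 [IsFiniteMeasure μ] (p : ℝ≥0∞) {t : Set Ω} (ht : MeasurableSet t) :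
    MemLp (t.indicator (1 : Ω → ℝ)) p μ :=
  memLp_indicator_const p ht 1 (Or.inr (measure_ne_top μ t))

theorem tendsto_sum_range_measureReal_atTop [IsFiniteMeasure μ] {s : ℕ → Set Ω}
    (hsum : ∑' n, μ (s n) = ∞) : Tendsto (fun n => ∑ k ∈ range n, μ.real (s k)) atTop atTop := by
  refine (not_summable_iff_tendsto_nat_atTop_of_nonneg fun _ => measureReal_nonneg).1 fun hsm => ?_
  have h : ENNReal.ofReal (∑' n, μ.real (s n)) = ∑' n, μ (s n) := by
    rw [ENNReal.ofReal_tsum_of_nonneg (fun _ => measureReal_nonneg) hsm]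
    exact tsum_congr fun n => ofReal_measureReal
  exact ENNReal.ofReal_ne_top (h.trans hsum)

variable [IsProbabilityMeasure μ] {ι : Type*} {s : ι → Set Ω}

theorem variance_indicator_one_le_s10 {t : Set Ω} (ht : MeasurableSet t) :
    variance (t.indicator (1 : Ω → ℝ)) μ ≤ μ.real t := by
  calc variance (t.indicator (1 : Ω → ℝ)) μ
      ≤ μ[t.indicator (1 : Ω → ℝ) ^ 2] :=
        variance_le_expectation_sq (measurable_const.indicator ht).aestronglyMeasurable
    _ = μ.real t := by
        have hsq : t.indicator (1 : Ω → ℝ) ^ 2 = t.indicator 1 := by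
          funext ω
          by_cases hω : ω ∈ t <;> simp [hω]
        rw [hsq, integral_indicator_one ht]

theorem variance_sum_indicator_one_le (hs : ∀ i, MeasurableSet (s i)) (t : Finset ι)
    (h : Set.Pairwise ↑t fun i j => IndepSet (s i) (s j) μ) :
    variance (∑ i ∈ t, (s i).indicator (1 : Ω → ℝ)) μ ≤ ∑ i ∈ t, μ.real (s i) := by
  rw [IndepFun.variance_sum (X := fun i => (s i).indicator 1)
    (fun i _ => memLp_indicator_one_s10 2 (hs i)) fun i hi j hj hij =>
      (h hi hj hij).indepFun_indicator_one]
  exact sum_le_sum fun i _ => variance_indicator_one_le_s10 (hs i)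

theorem measure_sum_indicator_one_le_half_le (hs : ∀ i, MeasurableSet (s i)) (t : Finset ι)
    (h : Set.Pairwise ↑t fun i j => IndepSet (s i) (s j) μ)
    (hpos : 0 < ∑ i ∈ t, μ.real (s i)) :
    μ {ω | ∑ i ∈ t, (s i).indicator 1 ω ≤ (∑ i ∈ t, μ.real (s i)) / 2} ≤
      ENNReal.ofReal (4 / ∑ i ∈ t, μ.real (s i)) := by
  set S := ∑ i ∈ t, μ.real (s i)
  set N := ∑ i ∈ t, (s i).indicator (1 : Ω → ℝ)
  have hN : MemLp N 2 μ := memLp_finsetSum' _ fun i _ => memLp_indicator_one_s10 2 (hs i)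
  have hmean : μ[N] = S := by
    simp only [N, Finset.sum_apply]
    rw [integral_finsetSum _ fun i _ => (memLp_indicator_one_s10 1 (hs i)).integrable le_rfl]
    exact sum_congr rfl fun i _ => integral_indicator_one (hs i)
  calc μ {ω | ∑ i ∈ t, (s i).indicator 1 ω ≤ S / 2}
      ≤ μ {ω | S / 2 ≤ |N ω - μ[N]|} := measure_mono fun ω (hω : _ ≤ S / 2) => by
        rw [← Finset.sum_apply] at hω
        rw [Set.mem_ofPred_eq, hmean, abs_sub_comm]
        exact (by linarith : S / 2 ≤ S - N ω).trans (le_abs_self _)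
    _ ≤ ENNReal.ofReal (variance N μ / (S / 2) ^ 2) := meas_ge_le_variance_div_sq hN (by linarith)
    _ ≤ ENNReal.ofReal (S / (S / 2) ^ 2) := by
        gcongr
        exact variance_sum_indicator_one_le hs t h
    _ = ENNReal.ofReal (4 / S) := by
        congr 1
        field_simp
        ring

theorem ae_frequently_mem_of_pairwise_indepSet {s : ℕ → Set Ω} (hs : ∀ n, MeasurableSet (s n))
    (h : Pairwise fun i j => IndepSet (s i) (s j) μ) (hsum : ∑' n, μ (s n) = ∞) :
    ∀ᵐ ω ∂μ, ∃ᶠ n in atTop, ω ∈ s n := by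
  have hS := tendsto_sum_range_measureReal_atTop hsum
  have hlim : Tendsto (fun n => ENNReal.ofReal (4 / ∑ k ∈ range n, μ.real (s k))) atTop (𝓝 0) := by
    simpa using ENNReal.tendsto_ofReal (tendsto_const_nhds.div_atTop hS)
  have hbounded_null : ∀ m : ℕ,
      μ {ω | ∀ n, ∑ k ∈ range n, (s k).indicator 1 ω ≤ (m : ℝ)} = 0 := by
    intro m
    refine le_antisymm (ge_of_tendsto hlim ?_) zero_le
    filter_upwards [hS.eventually_ge_atTop (2 * m), hS.eventually_gt_atTop 0] with n hm hpos
    refine (measure_mono fun ω hω => ?_).trans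
      (measure_sum_indicator_one_le_half_le hs _ (fun i _ j _ hij => h hij) hpos)
    exact (hω n).trans (by linarith)
  rw [ae_iff]
  refine measure_mono_null (fun ω hω => ?_) (measure_iUnion_null hbounded_null)
  obtain ⟨K, hK⟩ := eventually_atTop.1 (not_frequently.1 hω)
  exact Set.mem_iUnion.2 ⟨K, sum_range_indicator_le_of_forall_notMem hK⟩

end ProbabilityTheory

theorem Real.one_le_mul_exp_of_neg_log_div_le {c ρ x t : ℝ} (hc : 0 < c) (hρ : 0 < ρ)
    (hx : ρ < x) (ht : 0 ≤ t) (h : -Real.log c / ρ ≤ t) : 1 ≤ c * Real.exp (x * t) := by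
  have h' := (div_le_iff₀ hρ).1 h
  rw [← Real.exp_log hc, ← Real.exp_add]
  exact Real.one_le_exp (by nlinarith)

theorem stmt_10_general {Ω : Type*} [MeasurableSpace Ω] (P : MeasureTheory.Measure Ω)
    [MeasureTheory.IsProbabilityMeasure P]
    (l : ℕ → Ω → ℝ) (hlm : ∀ k, Measurable (l k)) (hlpos : ∀ k ω, 0 < l k ω)
    (hindep : Pairwise (fun i j => ProbabilityTheory.IndepFun (l i) (l j) P))
    (f : ℕ → ℂ) (hf : ∀ k, f k ≠ 0)
    (ρ : ℝ) (hρ : 0 < ρ)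
    (hconv : ∀ᵐ ω ∂P, ∃ x : ℝ, ρ < x ∧
      Summable (fun k => ‖f k‖ * Real.exp (x * l k ω))) :
    (∑' k : ℕ, P {ω | -Real.log (‖f k‖) / ρ ≤ l k ω}) < ⊤ := by
  set A : ℕ → Set Ω := fun k => {ω | -Real.log (‖f k‖) / ρ ≤ l k ω}
  have hA : ∀ k, MeasurableSet (A k) := fun k => hlm k measurableSet_Ici
  have hA_indep : Pairwise fun i j => IndepSet (A i) (A j) P := fun i j hij =>
    (indepFun_iff_indepSet_preimage (hlm i) (hlm j)).1 (hindep hij) _ _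
      measurableSet_Ici measurableSet_Ici
  have hA_finite : ∀ᵐ ω ∂P, ∀ᶠ k in atTop, ω ∉ A k := by
    filter_upwards [hconv] with ω ⟨x, hx, hsum⟩
    filter_upwards [hsum.tendsto_atTop_zero.eventually_lt_const one_pos] with k hk hmem
    exact hk.not_ge (Real.one_le_mul_exp_of_neg_log_div_le (norm_pos_iff.2 (hf k)) hρ hx
      (hlpos k ω).le hmem)
  by_contra htop
  rw [not_lt, top_le_iff] at htop
  obtain ⟨ω, hfreq, hev⟩ :=
    ((ae_frequently_mem_of_pairwise_indepSet hA hA_indep htop).and hA_finite).exists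
  obtain ⟨k, hmem, hnot⟩ := (hfreq.and_eventually hev).exists
  exact hnot hmem

/-- Dirichlet series with pairwise independent random exponents: if the abscissa of absolute
convergence satisfies `σ(f,ω) > ρ > 0` almost surely, then
`∑_k P{ω : λ_k(ω) ≥ (−log|f_k|)/ρ} < +∞`. -/
theorem stmt_10 {Ω : Type*} [MeasurableSpace Ω] (P : MeasureTheory.Measure Ω)
    [MeasureTheory.IsProbabilityMeasure P]
    (l : ℕ → Ω → ℝ) (hlm : ∀ k, Measurable (l k)) (hlpos : ∀ k ω, 0 < l k ω)
    (hindep : Pairwise (fun i j => ProbabilityTheory.IndepFun (l i) (l j) P))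
    (f : ℕ → ℂ) (hf : ∀ k, f k ≠ 0)
    (hcoef : Filter.Tendsto
      (fun k : ℕ => Real.log k / Real.log (‖f k‖)) Filter.atTop (nhds 0))
    (ρ : ℝ) (hρ : 0 < ρ)
    (hconv : ∀ᵐ ω ∂P, ∃ x : ℝ, ρ < x ∧
      Summable (fun k => ‖f k‖ * Real.exp (x * l k ω))) :
    (∑' k : ℕ, P {ω | -Real.log (‖f k‖) / ρ ≤ l k ω}) < ⊤ :=
  stmt_10_general P l hlm hlpos hindep f hf ρ hρ hconv
end
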